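/- Let A₁₁, A₁₂, A₂₂ be Riccati data on a complex separable Hilbert space H with diag{A₁₁} − A₂₂ ≫ 0, let (sₙ) be the successive approximations, and let s̲ and s̄ be the strong limits of the even and odd subsequences. If s̲ = s̄, then this common limit s satisfies diag{s} − A₂₂ ≫ 0 and solves the Riccati equation s = A₁₁ + A₁₂(diag{s} − A₂₂)⁻¹A₁₂*; that is, ρ_min² := s̲ = s̄ is a minimal solution in the sense that the inequality s ≥ A₁₁ + A₁₂(diag{s} − A₂₂)⁻¹A₁₂* holds with equality. -/

import Mathlib

open MeasureTheory ContinuousLinearMap Filter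
open scoped ENNReal NNReal Topology

noncomputable section

/-- `ℓ²(H)`: the Hilbert space of square-summable sequences in `H`, indexed by `ℕ`
(index `k : ℕ` corresponds to the `(k+1)`-st entry in the paper's `1`-based indexing). -/
abbrev l2 (H : Type*) [NormedAddCommGroup H] [InnerProductSpace ℂ H] : Type _ :=
  lp (fun _ : ℕ => H) 2

variable {H : Type*} [NormedAddCommGroup H] [InnerProductSpace ℂ H]

lemma memℓp_diag (q : H →L[ℂ] H) (ξ : l2 H) : Memℓp (fun k => q (ξ k)) 2 := by
  have h2 : (0:ℝ) < (2 : ℝ≥0∞).toReal := by norm_num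
  apply memℓp_gen
  have hs : Summable (fun k => ‖q‖ ^ (2 : ℝ≥0∞).toReal * ‖ξ k‖ ^ (2 : ℝ≥0∞).toReal) :=
    ((lp.memℓp ξ).summable h2).mul_left _
  refine Summable.of_nonneg_of_le (fun k => ?_) (fun k => ?_) hs
  · positivity
  · rw [← Real.mul_rpow (norm_nonneg _) (norm_nonneg _)]
    exact Real.rpow_le_rpow (norm_nonneg _) (q.le_opNorm _) (by norm_num)

/-- `diag{q}`: the bounded block-diagonal operator on `ℓ²(H)` acting componentwise,
`(diag{q} ξ)ₖ = q (ξₖ)`. -/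
def diagOp (q : H →L[ℂ] H) : l2 H →L[ℂ] l2 H :=
  LinearMap.mkContinuous
    { toFun := fun ξ => ⟨fun k => q (ξ k), memℓp_diag q ξ⟩
      map_add' := fun ξ η => by ext k; simp [lp.coeFn_add] <;> rfl
      map_smul' := fun c ξ => by ext k; simp [lp.coeFn_smul] }
    ‖q‖
    (by
      intro ξ
      have h2 : (0:ℝ) < (2 : ℝ≥0∞).toReal := by norm_num
      refine lp.norm_le_of_tsum_le h2 (by positivity) ?_
      have hξ : ‖ξ‖ ^ (2 : ℝ≥0∞).toReal = ∑' k, ‖ξ k‖ ^ (2 : ℝ≥0∞).toReal :=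
        lp.norm_rpow_eq_tsum h2 ξ
      have hsum : Summable (fun k => ‖ξ k‖ ^ (2 : ℝ≥0∞).toReal) := (lp.memℓp ξ).summable h2
      calc ∑' k, ‖(fun k => q (ξ k)) k‖ ^ (2 : ℝ≥0∞).toReal
          ≤ ∑' k, ‖q‖ ^ (2 : ℝ≥0∞).toReal * ‖ξ k‖ ^ (2 : ℝ≥0∞).toReal := by
            refine Summable.tsum_le_tsum (fun k => ?_) ?_ (hsum.mul_left _)
            · rw [← Real.mul_rpow (norm_nonneg _) (norm_nonneg _)]
              exact Real.rpow_le_rpow (norm_nonneg _) (q.le_opNorm _) (by norm_num)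
            · refine Summable.of_nonneg_of_le (fun k => ?_) (fun k => ?_)
                (hsum.mul_left (‖q‖ ^ (2 : ℝ≥0∞).toReal))
              · positivity
              · rw [← Real.mul_rpow (norm_nonneg _) (norm_nonneg _)]
                exact Real.rpow_le_rpow (norm_nonneg _) (q.le_opNorm _) (by norm_num)
        _ = (‖q‖ * ‖ξ‖) ^ (2 : ℝ≥0∞).toReal := by
            rw [tsum_mul_left, ← hξ, Real.mul_rpow (norm_nonneg _) (norm_nonneg _)])

@[simp] lemma diagOp_apply (q : H →L[ℂ] H) (ξ : l2 H) (k : ℕ) :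
    (diagOp q ξ) k = q (ξ k) := rfl

/-- An operator is *strongly positive* (written `ρ ≫ 0` in the paper) if `δ • I ≤ ρ`
(Loewner order) for some `δ > 0`.  A strongly positive operator is boundedly invertible. -/
def StronglyPositive {E : Type*} [NormedAddCommGroup E] [InnerProductSpace ℂ E]
    [CompleteSpace E] (ρ : E →L[ℂ] E) : Prop :=
  ∃ δ : ℝ, 0 < δ ∧ δ • (1 : E →L[ℂ] E) ≤ ρ

variable [CompleteSpace H]

/-- The Riccati map `ℱ(s) = A₁₁ + A₁₂ (diag{s} − A₂₂)⁻¹ A₁₂*`.  Here `Ring.inverse` is the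
genuine inverse whenever `diag{s} − A₂₂` is boundedly invertible, which is guaranteed when
`diag{s} − A₂₂ ≫ 0`. -/
def riccatiMap (A11 : H →L[ℂ] H) (A12 : l2 H →L[ℂ] H) (A22 : l2 H →L[ℂ] l2 H)
    (s : H →L[ℂ] H) : H →L[ℂ] H :=
  A11 + A12 ∘L Ring.inverse (diagOp s - A22) ∘L ContinuousLinearMap.adjoint A12

/-- The successive approximations `s₀ = A₁₁`, `s_{n+1} = ℱ(sₙ)`. -/
def riccatiSeq (A11 : H →L[ℂ] H) (A12 : l2 H →L[ℂ] H) (A22 : l2 H →L[ℂ] l2 H) :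
    ℕ → (H →L[ℂ] H)
  | 0 => A11
  | n + 1 => riccatiMap A11 A12 A22 (riccatiSeq A11 A12 A22 n)

end

/-!
Every iterate satisfies `sₙ ≥ A₁₁`: once `t ≥ A₁₁`, the gap `diag{t} - A₂₂ ≥ diag{A₁₁} - A₂₂ ≥ δ`
makes `(diag{t} - A₂₂)⁻¹` positive, hence `ℱ(t) - A₁₁ = A₁₂ (diag{t} - A₂₂)⁻¹ A₁₂*` positive.
The positive cone is closed under strong limits, so `s ≥ A₁₁` and `diag{s} - A₂₂ ≫ 0`.
On `{t ≥ A₁₁}` the inverses are uniformly bounded by `δ⁻¹`, so by the resolvent identity `ℱ` is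
strongly sequentially continuous there; strong convergence of `diag{tₙ}` comes from
Banach–Steinhaus and dominated convergence in `ℓ²`. Thus `s_{2n+1} = ℱ(s_{2n}) → ℱ(s)`, while
`s_{2n+1} → s` by hypothesis.
-/

open scoped ComplexOrder

section StronglyPositive

variable {E : Type*} [NormedAddCommGroup E] [InnerProductSpace ℂ E] [CompleteSpace E]
  {ρ σ : E →L[ℂ] E}

lemma StronglyPositive.mono (hρ : StronglyPositive ρ) (h : ρ ≤ σ) : StronglyPositive σ :=
  let ⟨δ, hδ, hδρ⟩ := hρ
  ⟨δ, hδ, hδρ.trans h⟩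

lemma StronglyPositive.isStrictlyPositive (hρ : StronglyPositive ρ) : IsStrictlyPositive ρ := by
  obtain ⟨δ, hδ, hδρ⟩ := hρ
  rw [← Algebra.algebraMap_eq_smul_one] at hδρ
  exact (isStrictlyPositive_algebraMap hδ).of_le hδρ

lemma StronglyPositive.isUnit (hρ : StronglyPositive ρ) : IsUnit ρ :=
  hρ.isStrictlyPositive.isUnit

lemma StronglyPositive.isPositive_ringInverse (hρ : StronglyPositive ρ) :
    (Ring.inverse ρ).IsPositive :=
  (nonneg_iff_isPositive _).mp hρ.isStrictlyPositive.ringInverse.nonneg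

lemma norm_ringInverse_le_of_smul_one_le {δ : ℝ} (hδ : 0 < δ) (h : δ • (1 : E →L[ℂ] E) ≤ ρ) :
    ‖Ring.inverse ρ‖ ≤ δ⁻¹ := by
  rw [← Algebra.algebraMap_eq_smul_one] at h
  have hδ' := isStrictlyPositive_algebraMap (A := E →L[ℂ] E) hδ
  have hinv : Ring.inverse (algebraMap ℝ (E →L[ℂ] E) δ) = algebraMap ℝ _ δ⁻¹ := by
    rw [← mul_one (Ring.inverse _), Ring.inverse_mul_eq_iff_eq_mul _ _ _ hδ'.isUnit, ← map_mul,
      mul_inv_cancel₀ hδ.ne', map_one]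
  have hρ : IsStrictlyPositive ρ := hδ'.of_le h
  rw [CStarAlgebra.norm_le_iff_le_algebraMap _ (inv_nonneg.mpr hδ.le) hρ.ringInverse.nonneg, ← hinv]
  exact CStarAlgebra.ringInverse_le_ringInverse h hδ'

end StronglyPositive

section StrongLimits

lemma ContinuousLinearMap.isPositive_iff_forall_inner_nonneg {E : Type*} [NormedAddCommGroup E]
    [InnerProductSpace ℂ E] (T : E →L[ℂ] E) : T.IsPositive ↔ ∀ x, 0 ≤ inner ℂ (T x) x := by
  rw [isPositive_iff_complex]
  refine forall_congr' fun x => ?_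
  rw [Complex.nonneg_iff, Complex.ext_iff]
  simp only [Complex.ofReal_re, Complex.ofReal_im, true_and, RCLike.re_to_complex]
  exact and_comm

variable {ι : Type*} {l : Filter ι}

lemma ContinuousLinearMap.le_of_tendsto_apply {E : Type*} [NormedAddCommGroup E]
    [InnerProductSpace ℂ E] [l.NeBot] {S U : E →L[ℂ] E} {T : ι → E →L[ℂ] E}
    (hT : ∀ x, Tendsto (fun i => T i x) l (𝓝 (U x))) (hle : ∀ᶠ i in l, S ≤ T i) : S ≤ U := by
  rw [le_def, isPositive_iff_forall_inner_nonneg]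
  intro x
  refine ge_of_tendsto (((hT x).sub tendsto_const_nhds).inner tendsto_const_nhds) ?_
  filter_upwards [hle] with i hi
  exact (isPositive_iff_forall_inner_nonneg _).mp ((le_def _ _).mp hi) x

lemma tendsto_ringInverse_apply {𝕜 E : Type*} [NontriviallyNormedField 𝕜] [NormedAddCommGroup E]
    [NormedSpace 𝕜 E] {T : ι → E →L[𝕜] E} {U : E →L[𝕜] E} {C : ℝ}
    (hT : ∀ x, Tendsto (fun i => T i x) l (𝓝 (U x))) (hunit : ∀ i, IsUnit (T i))
    (hU : IsUnit U) (hC : ∀ i, ‖Ring.inverse (T i)‖ ≤ C) (y : E) :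
    Tendsto (fun i => Ring.inverse (T i) y) l (𝓝 (Ring.inverse U y)) := by
  set z := Ring.inverse U y
  have hresolvent : ∀ i, Ring.inverse (T i) y - z = Ring.inverse (T i) ((U - T i) z) := fun i => by
    rw [← sub_apply, Ring.inverse_sub_inverse (iff_of_true (hunit i) hU)]; rfl
  have hlim : Tendsto (fun i => (U - T i) z) l (𝓝 0) := by
    simpa only [sub_apply, sub_self] using (tendsto_const_nhds (x := U z)).sub (hT z)
  rw [tendsto_iff_norm_sub_tendsto_zero]
  refine squeeze_zero (fun _ => norm_nonneg _) (fun i => ?_)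
    (by simpa using (tendsto_norm_zero.comp hlim).const_mul C)
  rw [hresolvent]
  exact ((Ring.inverse (T i)).le_opNorm _).trans (mul_le_mul_of_nonneg_right (hC i) (norm_nonneg _))

end StrongLimits

lemma lp.norm_sq_eq_tsum {ι : Type*} {G : ι → Type*} [∀ i, NormedAddCommGroup (G i)]
    (f : lp G 2) : ‖f‖ ^ 2 = ∑' i, ‖f i‖ ^ 2 := by
  have h := lp.norm_rpow_eq_tsum (p := 2) (by norm_num) f
  rw [ENNReal.toReal_ofNat] at h
  simpa only [Real.rpow_two] using h

lemma lp.summable_norm_sq {ι : Type*} {G : ι → Type*} [∀ i, NormedAddCommGroup (G i)]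
    (f : lp G 2) : Summable fun i => ‖f i‖ ^ 2 := by
  have h := (lp.memℓp f).summable (p := 2) (by norm_num)
  rw [ENNReal.toReal_ofNat] at h
  simpa only [Real.rpow_two] using h

section DiagOp

variable {H : Type*} [NormedAddCommGroup H] [InnerProductSpace ℂ H]

lemma diagOp_sub (p q : H →L[ℂ] H) : diagOp (p - q) = diagOp p - diagOp q := by
  ext ξ k
  simp

lemma diagOp_mono : Monotone (diagOp : (H →L[ℂ] H) → l2 H →L[ℂ] l2 H) := by
  intro p q h
  rw [ContinuousLinearMap.le_def, isPositive_iff_forall_inner_nonneg] at h ⊢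
  rw [← diagOp_sub]
  intro ξ
  rw [lp.inner_eq_tsum]
  exact tsum_nonneg fun k => h (ξ k)

variable [CompleteSpace H]

lemma tendsto_diagOp_apply {T : ℕ → H →L[ℂ] H} {U : H →L[ℂ] H}
    (hT : ∀ x, Tendsto (fun n => T n x) atTop (𝓝 (U x))) (ξ : l2 H) :
    Tendsto (fun n => diagOp (T n) ξ) atTop (𝓝 (diagOp U ξ)) := by
  set D := fun n => T n - U
  have hD : ∀ x, Tendsto (fun n => D n x) atTop (𝓝 0) := fun x => by
    simpa only [D, sub_apply, sub_self] using (hT x).sub (tendsto_const_nhds (x := U x))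
  obtain ⟨C, hC⟩ : ∃ C, ∀ n, ‖D n‖ ≤ C :=
    banach_steinhaus fun x => (hD x).norm.bddAbove_range.imp fun C hC n => hC ⟨n, rfl⟩
  have hsq : Tendsto (fun n => ‖diagOp (D n) ξ‖ ^ 2) atTop (𝓝 0) := by
    simp_rw [lp.norm_sq_eq_tsum, diagOp_apply]
    rw [← tsum_zero]
    refine tendsto_tsum_of_dominated_convergence ((lp.summable_norm_sq ξ).mul_left (C ^ 2))
      (fun k => by simpa using (hD (ξ k)).norm.pow 2) (Eventually.of_forall fun n k => ?_)
    rw [norm_pow, norm_norm, ← mul_pow]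
    exact pow_le_pow_left₀ (norm_nonneg _) ((D n).le_of_opNorm_le (hC n) _) 2
  rw [tendsto_iff_norm_sub_tendsto_zero]
  simpa [D, diagOp_sub, Function.comp_def, Real.sqrt_sq (norm_nonneg _)] using
    (Real.continuous_sqrt.tendsto 0).comp hsq

end DiagOp

section Riccati

variable {H : Type*} [NormedAddCommGroup H] [InnerProductSpace ℂ H] [CompleteSpace H]
  {A11 : H →L[ℂ] H} {A12 : l2 H →L[ℂ] H} {A22 : l2 H →L[ℂ] l2 H}

lemma diagOp_sub_le_diagOp_sub {t : H →L[ℂ] H} (ht : A11 ≤ t) :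
    diagOp A11 - A22 ≤ diagOp t - A22 :=
  sub_le_sub_right (diagOp_mono ht) A22

lemma le_riccatiMap (hgap : StronglyPositive (diagOp A11 - A22)) {t : H →L[ℂ] H} (ht : A11 ≤ t) :
    A11 ≤ riccatiMap A11 A12 A22 t :=
  le_add_of_nonneg_right <| (nonneg_iff_isPositive _).mpr <|
    (hgap.mono (diagOp_sub_le_diagOp_sub ht)).isPositive_ringInverse.conj_adjoint A12

lemma le_riccatiSeq (hgap : StronglyPositive (diagOp A11 - A22)) :
    ∀ n, A11 ≤ riccatiSeq A11 A12 A22 n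
  | 0 => le_rfl
  | n + 1 => le_riccatiMap hgap (le_riccatiSeq hgap n)

lemma tendsto_riccatiMap_apply (hgap : StronglyPositive (diagOp A11 - A22))
    {t : ℕ → H →L[ℂ] H} {s : H →L[ℂ] H} (ht : ∀ n, A11 ≤ t n) (hs : A11 ≤ s)
    (hts : ∀ x, Tendsto (fun n => t n x) atTop (𝓝 (s x))) (x : H) :
    Tendsto (fun n => riccatiMap A11 A12 A22 (t n) x) atTop (𝓝 (riccatiMap A11 A12 A22 s x)) := by
  have ⟨δ, hδ, hδA⟩ := hgap
  have hinv := tendsto_ringInverse_apply (C := δ⁻¹)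
    (fun ξ => (tendsto_diagOp_apply hts ξ).sub_const (A22 ξ))
    (fun n => (hgap.mono (diagOp_sub_le_diagOp_sub (ht n))).isUnit)
    (hgap.mono (diagOp_sub_le_diagOp_sub hs)).isUnit
    (fun n => norm_ringInverse_le_of_smul_one_le hδ (hδA.trans (diagOp_sub_le_diagOp_sub (ht n))))
  simp only [riccatiMap, add_apply, comp_apply]
  exact tendsto_const_nhds.add ((A12.continuous.tendsto _).comp (hinv _))

end Riccati

theorem riccati_equal_limits_solve_equation_general
    {H : Type*} [NormedAddCommGroup H] [InnerProductSpace ℂ H] [CompleteSpace H]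
    (A11 : H →L[ℂ] H) (A12 : l2 H →L[ℂ] H) (A22 : l2 H →L[ℂ] l2 H)
    (hgap : StronglyPositive (diagOp A11 - A22))
    (s : H →L[ℂ] H)
    (heven : ∀ x : H, Filter.Tendsto (fun n => riccatiSeq A11 A12 A22 (2 * n) x)
      Filter.atTop (𝓝 (s x)))
    (hodd : ∀ x : H, Filter.Tendsto (fun n => riccatiSeq A11 A12 A22 (2 * n + 1) x)
      Filter.atTop (𝓝 (s x))) :
    StronglyPositive (diagOp s - A22) ∧ riccatiMap A11 A12 A22 s = s := by
  have hA11s : A11 ≤ s :=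
    le_of_tendsto_apply heven (Eventually.of_forall fun n => le_riccatiSeq hgap (2 * n))
  refine ⟨hgap.mono (diagOp_sub_le_diagOp_sub hA11s), ext fun x => ?_⟩
  exact tendsto_nhds_unique
    (tendsto_riccatiMap_apply hgap (fun n => le_riccatiSeq hgap (2 * n)) hA11s heven x) (hodd x)

/-- **Corollary 2.3.**  If the strong limits of the even and odd successive approximations
coincide (`s̲ = s̄ = s`), then `diag{s} − A₂₂ ≫ 0` and the common limit solves the
Riccati equation: `s = A₁₁ + A₁₂(diag{s} − A₂₂)⁻¹A₁₂*` (so the minimality inequality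
`s ≥ A₁₁ + A₁₂(diag{s} − A₂₂)⁻¹A₁₂*` holds with equality, i.e. `ρ_min² = s`). -/
theorem riccati_equal_limits_solve_equation
    {H : Type*} [NormedAddCommGroup H] [InnerProductSpace ℂ H] [CompleteSpace H]
    [TopologicalSpace.SeparableSpace H]
    (A11 : H →L[ℂ] H) (A12 : l2 H →L[ℂ] H) (A22 : l2 H →L[ℂ] l2 H)
    (hA11sa : IsSelfAdjoint A11) (hA22sa : IsSelfAdjoint A22)
    (hgap : StronglyPositive (diagOp A11 - A22))
    (s : H →L[ℂ] H) (hs : IsSelfAdjoint s)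
    (heven : ∀ x : H, Filter.Tendsto (fun n => riccatiSeq A11 A12 A22 (2 * n) x)
      Filter.atTop (𝓝 (s x)))
    (hodd : ∀ x : H, Filter.Tendsto (fun n => riccatiSeq A11 A12 A22 (2 * n + 1) x)
      Filter.atTop (𝓝 (s x))) :
    StronglyPositive (diagOp s - A22) ∧ riccatiMap A11 A12 A22 s = s :=
  riccati_equal_limits_solve_equation_general A11 A12 A22 hgap s heven hodd
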